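/- arXiv:1402.4617 — 3 statements merged into one kernel-verified Lean document; each statement's English description precedes it below -/
import Mathlib

section
/- If μ''₂ ≥ (μ'_VE)² (Cauchy–Schwarz for the vertex edge-count) and 3 ≤ μ'_VE, then the quantity ψ = (μ''₂ + 3φ)/μ'_VE − 1 − (1/2)·μ'_{EV[π]} with μ'_{EV[π]} ≤ 2 − 6(1−φ)/μ'_VE and 0 ≤ φ ≤ 1 satisfies ψ ≥ μ'_VE + 3/μ'_VE − 2 ≥ 2. -/
theorem stmt4 (φ μVE μ2 μEVπ ψ : ℝ)
    (hmom : μ2 ≥ μVE ^ 2) (hμ : 3 ≤ μVE)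
    (hψ : ψ = (μ2 + 3 * φ) / μVE - 1 - (1/2) * μEVπ)
    (hub : μEVπ ≤ 2 - 6 * (1 - φ) / μVE)
    (hφ0 : 0 ≤ φ) (hφ1 : φ ≤ 1) :
    ψ ≥ μVE + 3 / μVE - 2 ∧ μVE + 3 / μVE - 2 ≥ 2 := by
  have hpos : (0:ℝ) < μVE := by linarith
  have hne : μVE ≠ 0 := ne_of_gt hpos
  constructor
  · rw [hψ, ge_iff_le, ← sub_nonneg]
    have key : (μ2 + 3 * φ) / μVE - 1 - 1 / 2 * μEVπ - (μVE + 3 / μVE - 2) =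
        ((μ2 - μVE ^ 2) + ((2 - 6 * (1 - φ) / μVE) - μEVπ) * (μVE / 2)) / μVE := by
      field_simp; ring
    rw [key]
    apply div_nonneg _ hpos.le
    have h1 : (0:ℝ) ≤ μ2 - μVE ^ 2 := by linarith
    have h2 : (0:ℝ) ≤ ((2 - 6 * (1 - φ) / μVE) - μEVπ) * (μVE / 2) := by
      apply mul_nonneg (by linarith) (by linarith)
    linarith
  · rw [ge_iff_le, ← sub_nonneg]
    have : μVE + 3 / μVE - 2 - 2 = (μVE - 1) * (μVE - 3) / μVE := by
      field_simp; ring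
    rw [this]
    apply div_nonneg (mul_nonneg (by linarith) (by linarith)) hpos.le
end

section
/- Given λ_P·ℓ̄_P = 3λ'_E·γ̄_E + 2λ'_E with λ_P = λ'_V·ᾱ_V + λ'_Z·ρ̄_Z > 0, λ'_E = λ'_V·μ'_VE/2, λ'_Z = λ'_V(μ'_VE−2)/2 and λ'_E·ᾱ_E = λ'_V·ᾱ_V, the mean perimeter of the typical plate is ℓ̄_P = (3γ̄_E + 2)·μ'_VE / ((μ'_VE − 2)·ρ̄_Z + μ'_VE·ᾱ_E). -/
/-! Both sides of `λ_P ℓ̄_P = (3γ̄_E + 2) λ'_E` are multiples of `λ'_V / 2`: the right side through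
`λ'_E = λ'_V μ'_VE / 2`, and the plate intensity, after trading `λ'_V ᾱ_V` for `λ'_E ᾱ_E`, as
`λ'_V ((μ'_VE - 2) ρ̄_Z + μ'_VE ᾱ_E) / 2`. Since `λ_P > 0` neither factor vanishes, and dividing gives
the formula. -/

lemma plateIntensity_eq_vertexIntensity_mul {lamP lam'V lam'E lam'Z μVE ρZ αE αV : ℝ}
    (hlamP : lamP = lam'V * αV + lam'Z * ρZ) (hE : lam'E = lam'V * μVE / 2)
    (hZ : lam'Z = lam'V * (μVE - 2) / 2) (hid : lam'E * αE = lam'V * αV) :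
    lamP = lam'V * ((μVE - 2) * ρZ + μVE * αE) / 2 := by
  rw [hlamP, ← hid, hE, hZ]
  ring

theorem stmt13 (lamP ℓP lam'V lam'E lam'Z μVE γE ρZ αE αV : ℝ)
    (h1 : lamP * ℓP = 3 * lam'E * γE + 2 * lam'E)
    (hlamP : lamP = lam'V * αV + lam'Z * ρZ) (hlamPpos : 0 < lamP)
    (hE : lam'E = lam'V * μVE / 2)
    (hZ : lam'Z = lam'V * (μVE - 2) / 2)
    (hid : lam'E * αE = lam'V * αV) :
    ℓP = (3 * γE + 2) * μVE / ((μVE - 2) * ρZ + μVE * αE) := by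
  have hD := plateIntensity_eq_vertexIntensity_mul hlamP hE hZ hid
  have hne : lam'V * ((μVE - 2) * ρZ + μVE * αE) ≠ 0 := by
    intro h
    rw [h, zero_div] at hD
    exact hlamPpos.ne' hD
  obtain ⟨hV, hDne⟩ := mul_ne_zero_iff.mp hne
  rw [eq_div_iff hDne]
  apply mul_left_cancel₀ hV
  linear_combination 2 * h1 - 2 * ℓP * hD + 2 * (3 * γE + 2) * hE
end

section
/- Given λ_Z·ā_ZZ₂ = λ_Z·ā_Z + 2λ_{P[hor]}·ā_{P[hor]} with λ_Z = λ'_Z·ρ̄_Z > 0, λ_Z·ā_Z = 2λ_P·ā_P = 2(λ'_Z·γ̄_Z + λ'_E·ℓ̄'_E), λ_{P[hor]}·ā_{P[hor]} = λ'_Z·γ̄_Z, and λ'_E = λ'_Z·μ'_VE/(μ'_VE − 2), one obtains ā_ZZ₂ = (2/ρ̄_Z)·(2γ̄_Z + μ'_VE·ℓ̄'_E/(μ'_VE − 2)). -/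
theorem stmt17 (lamZ aZZ2 aZ lamPhor aPhor lamP aP lam'Z lam'E μVE ρZ γZ ℓ'E : ℝ)
    (h1 : lamZ * aZZ2 = lamZ * aZ + 2 * (lamPhor * aPhor))
    (hlamZ : lamZ = lam'Z * ρZ) (hlamZpos : 0 < lamZ)
    (haZ : lamZ * aZ = 2 * (lamP * aP))
    (haZ' : lamP * aP = lam'Z * γZ + lam'E * ℓ'E)
    (hPhor : lamPhor * aPhor = lam'Z * γZ)
    (hE : lam'E = lam'Z * μVE / (μVE - 2)) :
    aZZ2 = (2 / ρZ) * (2 * γZ + μVE * ℓ'E / (μVE - 2)) := by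
  -- `ring` treats `/ (μVE - 2)` as a formal inverse, so the junk case `μVE = 2` needs no split.
  have hEdges : lam'E * ℓ'E = lam'Z * (μVE * ℓ'E / (μVE - 2)) := by rw [hE]; ring
  have hρZ : ρZ ≠ 0 := by rintro rfl; simp [hlamZ] at hlamZpos
  apply mul_left_cancel₀ hlamZpos.ne'
  rw [h1, haZ, haZ', hPhor, hEdges, hlamZ]
  field_simp
  ring
end
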